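/- arXiv:1707.06514 — 4 statements merged into one kernel-verified Lean document; each statement's English description precedes it below -/
import Mathlib

section
/- For positive reals $a_1,\ldots,a_n$ and a positive integer $k$, let $M_k(a_1,\ldots,a_n)$ denote the $k$-th smallest element (with multiplicity) of the multiset of all positive integer multiples $m a_i$ ($m \ge 1$, $1 \le i \le n$). Then $\min\{\max_{i} a_i v_i \mid v \in \mathbb{N}^n, \sum_i v_i = k\} = M_k(a_1,\ldots,a_n)$. -/
/-!
A vector `v` with `∑ vᵢ = k` and `max aᵢ vᵢ ≤ L` exists exactly when the capacities
`⌊L / aᵢ⌋` add up to at least `k`: the bound `aᵢ vᵢ ≤ L` says `vᵢ ≤ ⌊L / aᵢ⌋`, and any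
family of capacities of total at least `k` can be filled up to total exactly `k`. So the
first set of the theorem lies inside the second (its elements are positive as `k > 0`), and
every element of the second dominates one of the first.
-/

open Finset

theorem csInf_eq_csInf_of_subset_of_forall_exists_le {α : Type*}
    [ConditionallyCompleteLattice α] {s t : Set α} (hs : s.Nonempty) (ht : BddBelow t)
    (hst : s ⊆ t) (h : ∀ y ∈ t, ∃ x ∈ s, x ≤ y) : sInf s = sInf t :=
  le_antisymm
    (le_csInf (hs.mono hst) fun y hy =>
      let ⟨_, hx, hxy⟩ := h y hy
      (csInf_le (ht.mono hst) hx).trans hxy)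
    (csInf_le_csInf ht hs hst)

theorem Fintype.exists_le_sum_eq_of_le_sum {ι : Type*} [Fintype ι] [DecidableEq ι]
    {m : ι → ℕ} : ∀ {k : ℕ}, k ≤ ∑ i, m i → ∃ v ≤ m, ∑ i, v i = k
  | 0, _ => ⟨0, fun _ => Nat.zero_le _, by simp⟩
  | k + 1, hk => by
    obtain ⟨v, hvm, hv⟩ := exists_le_sum_eq_of_le_sum (m := m) (k := k) (by omega)
    obtain ⟨i, -, hi⟩ := exists_lt_of_sum_lt (s := univ) (hv ▸ hk : ∑ i, v i < ∑ i, m i)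
    refine ⟨v + Pi.single i 1, fun j => ?_, by simp [sum_add_distrib, hv]⟩
    rcases eq_or_ne j i with rfl | hji
    · simpa using hi
    · simpa [hji] using hvm j

theorem natCast_le_floor_div_iff {a L : ℝ} (ha : 0 < a) (v : ℕ) :
    (v : ℤ) ≤ ⌊L / a⌋ ↔ a * v ≤ L := by
  rw [Int.le_floor, le_div_iff₀ ha, mul_comm, Int.cast_natCast]

theorem exists_sum_eq_forall_mul_le_iff {ι : Type*} [Fintype ι] {a : ι → ℝ}
    (ha : ∀ i, 0 < a i) {L : ℝ} (hL : 0 ≤ L) (k : ℕ) :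
    (∃ v : ι → ℕ, ∑ i, v i = k ∧ ∀ i, a i * v i ≤ L) ↔ (k : ℤ) ≤ ∑ i, ⌊L / a i⌋ := by
  have hfloor : ∀ i, 0 ≤ ⌊L / a i⌋ := fun i => Int.floor_nonneg.mpr (by positivity [ha i])
  constructor
  · rintro ⟨v, rfl, hv⟩
    push_cast
    exact sum_le_sum fun i _ => (natCast_le_floor_div_iff (ha i) (v i)).mpr (hv i)
  · intro hk
    classical
    have hcap : k ≤ ∑ i, ⌊L / a i⌋.toNat := by
      zify
      simpa only [Int.toNat_of_nonneg (hfloor _)] using hk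
    obtain ⟨v, hvm, hv⟩ := Fintype.exists_le_sum_eq_of_le_sum hcap
    exact ⟨v, hv, fun i =>
      (natCast_le_floor_div_iff (ha i) (v i)).mp ((Int.le_toNat (hfloor i)).mp (hvm i))⟩

/-- `min { max_i a_i v_i : v ∈ ℕ^n, ∑ v_i = k } = M_k(a_1,…,a_n)`,
where `M_k` is the smallest `L > 0` with `∑ ⌊L/a_i⌋ ≥ k` (the `k`-th smallest
positive integer multiple of the `a_i` with multiplicity). -/
theorem stmt0 (n : ℕ) (hn : 0 < n) (a : Fin n → ℝ) (ha : ∀ i, 0 < a i)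
    (k : ℕ) (hk : 0 < k) :
    sInf {L : ℝ | ∃ v : Fin n → ℕ, (∑ i, v i) = k ∧
        L = Finset.univ.sup' (Finset.univ_nonempty_iff.mpr ⟨⟨0, hn⟩⟩)
          (fun i => a i * (v i : ℝ))} =
      sInf {L : ℝ | 0 < L ∧ (k : ℤ) ≤ ∑ i, ⌊L / a i⌋} := by
  apply csInf_eq_csInf_of_subset_of_forall_exists_le
  · exact ⟨_, Pi.single ⟨0, hn⟩ k, by simp, rfl⟩
  · exact ⟨0, fun L hL => hL.1.le⟩
  · rintro _ ⟨v, hv, rfl⟩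
    have hle : ∀ i, a i * v i ≤ univ.sup' _ fun i => a i * (v i : ℝ) :=
      fun i => le_sup' (fun i => a i * (v i : ℝ)) (mem_univ i)
    obtain ⟨i, -, hi⟩ := exists_ne_zero_of_sum_ne_zero (hv.trans_ne hk.ne')
    have hpos := (mul_pos (ha i) (Nat.cast_pos.mpr (Nat.pos_of_ne_zero hi))).trans_le (hle i)
    exact ⟨hpos, (exists_sum_eq_forall_mul_le_iff ha hpos.le k).mp ⟨v, hv, hle⟩⟩
  · rintro L ⟨hL, hLk⟩
    obtain ⟨v, hv, hvL⟩ := (exists_sum_eq_forall_mul_le_iff ha hL.le k).mpr hLk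
    exact ⟨_, ⟨v, hv, rfl⟩, sup'_le _ _ fun i _ => hvL i⟩
end

section
/- For positive reals $a_1,\ldots,a_n$ and a positive integer $k$, $\max\{\min_i a_i v_i \mid v \in \mathbb{Z}_{>0}^n, \sum_i v_i = k+n-1\} = M_k(a_1,\ldots,a_n)$, where all components of $v$ are required to be positive integers. -/
/-!
Let `N(t) = ∑ ⌊t / aᵢ⌋` count the multiples of the `aᵢ` up to `t`. If `t < aᵢ vᵢ` for every
`i`, then `⌊t / aᵢ⌋ ≤ vᵢ - 1`, so `N(t) ≤ ∑ vᵢ - n = k - 1`; hence every value `min aᵢ vᵢ` lies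
below every `t` with `N(t) ≥ k`. Conversely, take `v` maximising `min aᵢ vᵢ = L`. If `N(L) < k`,
the vector `wᵢ = ⌊L / aᵢ⌋ + 1` has sum at most `k + n - 1` and `aᵢ wᵢ > L` for all `i`; padding
one coordinate of `w` to reach the sum `k + n - 1` would beat `v`. So `L` is both the largest
value of the first set and the least element of the second.
-/

open Finset

variable {ι K : Type*} [Fintype ι] [Field K] [LinearOrder K] [IsStrictOrderedRing K] [FloorRing K]

theorem Int.floor_div_lt_iff {a t : K} (ha : 0 < a) {m : ℤ} : ⌊t / a⌋ < m ↔ t < a * m := by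
  rw [Int.floor_lt, div_lt_iff₀ ha, mul_comm]

theorem exists_le_sum_eq_of_sum_le [Nonempty ι] {w : ι → ℕ} {s : ℕ} (h : ∑ i, w i ≤ s) :
    ∃ v, w ≤ v ∧ ∑ i, v i = s := by
  classical
  let i₀ : ι := Classical.arbitrary ι
  refine ⟨w + Pi.single i₀ (s - ∑ i, w i), le_self_add, ?_⟩
  simp only [Pi.add_apply, Finset.sum_add_distrib, Finset.sum_pi_single', if_pos (mem_univ _)]
  omega

theorem sum_floor_div_add_card_le {a : ι → K} (ha : ∀ i, 0 < a i) {v : ι → ℕ} {t : K}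
    (ht : ∀ i, t < a i * v i) : ∑ i, ⌊t / a i⌋ + Fintype.card ι ≤ ∑ i, (v i : ℤ) := by
  have h : ∀ i, ⌊t / a i⌋ + 1 ≤ v i := fun i =>
    Int.add_one_le_of_lt ((Int.floor_div_lt_iff (ha i)).2 (by exact_mod_cast ht i))
  simpa [Finset.sum_add_distrib] using Finset.sum_le_sum fun i (_ : i ∈ univ) => h i

section Multiples

variable [Nonempty ι] {a : ι → K}

theorem inf'_mul_pos (ha : ∀ i, 0 < a i) {v : ι → ℕ} (hv : ∀ i, 0 < v i) :
    0 < univ.inf' univ_nonempty (fun i => a i * v i) :=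
  (lt_inf'_iff _).2 fun i _ => mul_pos (ha i) (by exact_mod_cast hv i)

theorem inf'_mul_le_of_le_sum_floor_div (ha : ∀ i, 0 < a i) {k : ℕ} {v : ι → ℕ}
    (hv : ∑ i, v i = k + Fintype.card ι - 1) {t : K} (ht : (k : ℤ) ≤ ∑ i, ⌊t / a i⌋) :
    univ.inf' univ_nonempty (fun i => a i * v i) ≤ t := by
  by_contra! hlt
  have hcount := sum_floor_div_add_card_le ha fun i => (lt_inf'_iff _).1 hlt i (mem_univ i)
  have hcard : 0 < Fintype.card ι := Fintype.card_pos
  have hsum : ∑ i, (v i : ℤ) = k + Fintype.card ι - 1 := by rw [← Nat.cast_sum, hv]; omega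
  omega

theorem exists_inf'_mul_le_sum_floor_div (ha : ∀ i, 0 < a i) {k : ℕ} (hk : 0 < k) :
    ∃ v : ι → ℕ, (∀ i, 0 < v i) ∧ ∑ i, v i = k + Fintype.card ι - 1 ∧
      (k : ℤ) ≤ ∑ i, ⌊univ.inf' univ_nonempty (fun i => a i * v i) / a i⌋ := by
  classical
  set s := k + Fintype.card ι - 1
  let P := (univ.piAntidiag s).filter fun v : ι → ℕ => ∀ i, 0 < v i
  have mem_P {v : ι → ℕ} : v ∈ P ↔ (∀ i, 0 < v i) ∧ ∑ i, v i = s := by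
    simp [P, mem_piAntidiag, and_comm]
  have hP : P.Nonempty := by
    obtain ⟨v, hv, hvs⟩ := exists_le_sum_eq_of_sum_le
      (show ∑ _i : ι, 1 ≤ s by simp [s]; omega)
    exact ⟨v, mem_P.2 ⟨fun i => hv i, hvs⟩⟩
  obtain ⟨v, hvP, hvmax⟩ :=
    P.exists_max_image (fun v => univ.inf' univ_nonempty (fun i => a i * v i)) hP
  obtain ⟨hv_pos, hv_sum⟩ := mem_P.1 hvP
  refine ⟨v, hv_pos, hv_sum, ?_⟩
  set L := univ.inf' univ_nonempty (fun i => a i * v i)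
  have hL : 0 < L := inf'_mul_pos ha hv_pos
  by_contra! hcount
  -- the smallest vector with `L < aᵢ wᵢ` for every `i`
  let w : ι → ℕ := fun i => ⌊L / a i⌋₊ + 1
  have hw_cast : ∀ i, (w i : ℤ) = ⌊L / a i⌋ + 1 := fun i => by
    simp [w, Int.natCast_floor_eq_floor (div_pos hL (ha i)).le]
  have hLw : ∀ i, L < a i * w i := fun i => by
    exact_mod_cast (Int.floor_div_lt_iff (ha i) (m := w i)).1 (by rw [hw_cast]; omega)
  have hw_sum : ∑ i, w i ≤ s := by
    have : ∑ i, (w i : ℤ) = ∑ i, ⌊L / a i⌋ + Fintype.card ι := by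
      simp [hw_cast, Finset.sum_add_distrib]
    zify [show 1 ≤ k + Fintype.card ι by omega]
    omega
  obtain ⟨u, hwu, hu_sum⟩ := exists_le_sum_eq_of_sum_le hw_sum
  have hLu : L < univ.inf' univ_nonempty (fun i => a i * u i) :=
    (lt_inf'_iff _).2 fun i _ =>
      (hLw i).trans_le (mul_le_mul_of_nonneg_left (by exact_mod_cast hwu i) (ha i).le)
  exact hLu.not_ge (hvmax u (mem_P.2 ⟨fun i => Nat.succ_pos _ |>.trans_le (hwu i), hu_sum⟩))

end Multiples

/-- `max { min_i a_i v_i : v ∈ ℤ_{>0}^n, ∑ v_i = k+n-1 } = M_k(a_1,…,a_n)`,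
where `M_k` is the smallest `L > 0` with `∑ ⌊L/a_i⌋ ≥ k`. -/
theorem stmt1 (n : ℕ) (hn : 0 < n) (a : Fin n → ℝ) (ha : ∀ i, 0 < a i)
    (k : ℕ) (hk : 0 < k) :
    sSup {L : ℝ | ∃ v : Fin n → ℕ, (∀ i, 0 < v i) ∧ (∑ i, v i) = k + n - 1 ∧
        L = Finset.univ.inf' (Finset.univ_nonempty_iff.mpr ⟨⟨0, hn⟩⟩)
          (fun i => a i * (v i : ℝ))} =
      sInf {L : ℝ | 0 < L ∧ (k : ℤ) ≤ ∑ i, ⌊L / a i⌋} := by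
  have : Nonempty (Fin n) := ⟨⟨0, hn⟩⟩
  obtain ⟨v, hv_pos, hv_sum, hv_count⟩ := exists_inf'_mul_le_sum_floor_div ha hk
  rw [Fintype.card_fin] at hv_sum
  have hle {w : Fin n → ℕ} (hw : ∑ i, w i = k + n - 1) {t : ℝ} (ht : (k : ℤ) ≤ ∑ i, ⌊t / a i⌋) :
      univ.inf' univ_nonempty (fun i => a i * (w i : ℝ)) ≤ t :=
    inf'_mul_le_of_le_sum_floor_div ha (by rwa [Fintype.card_fin]) ht
  refine (IsGreatest.csSup_eq (a := univ.inf' univ_nonempty fun i => a i * (v i : ℝ)) ?_).trans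
    (IsLeast.csInf_eq ?_).symm
  · refine ⟨⟨v, hv_pos, hv_sum, rfl⟩, ?_⟩
    rintro _ ⟨w, -, hw, rfl⟩
    exact hle hw hv_count
  · exact ⟨⟨inf'_mul_pos ha hv_pos, hv_count⟩, fun t ht => hle hv_sum ht.2⟩
end

section
/- Suppose functions $c_k$ ($k \ge 1$) on star-shaped domains in $\mathbb{R}^{2n}$ satisfy monotonicity under inclusion and $c_k(E(a_1,\ldots,a_n)) = M_k(a_1,\ldots,a_n)$ for ellipsoids. Let $\Omega \subset \mathbb{R}^n_{\ge 0}$ be compact convex (as a toric moment image of a convex toric domain $X_\Omega$) and $v \in \mathbb{Z}_{>0}^n$ with $\sum_i v_i = k$ and $L = \|v\|^*_\Omega$. Then $\Omega \subset \Omega' := \{x \in \mathbb{R}^n_{\ge 0} : \langle v, x \rangle \le L\}$, the toric domain $X_{\Omega'}$ is the ellipsoid $E(L/v_1,\ldots,L/v_n)$, and $c_k(X_{\Omega'}) = L$; hence $c_k(X_\Omega) \le \|v\|^*_\Omega$. -/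
open Finset

/-- `M_k(a_1,…,a_n)`: the least `L > 0` with `∑ ⌊L/a_i⌋ ≥ k` (equivalently, the
`k`-th smallest positive integer multiple of the `a_i`, with multiplicity). -/
noncomputable def Mcap (n : ℕ) (a : Fin n → ℝ) (k : ℕ) : ℝ :=
  sInf {L : ℝ | 0 < L ∧ (k : ℤ) ≤ ∑ i, ⌊L / a i⌋}

/-- The ellipsoid `E(a_1,…,a_n) = {z ∈ ℂ^n : ∑ π|z_i|²/a_i ≤ 1}`. -/
noncomputable def ellipsoid (n : ℕ) (a : Fin n → ℝ) : Set (Fin n → ℂ) :=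
  {z | ∑ i, Real.pi * ‖z i‖ ^ 2 / a i ≤ 1}

/-- The toric domain `X_Ω = μ⁻¹(Ω)` where `μ(z) = π(|z_1|²,…,|z_n|²)`. -/
noncomputable def toricDomain (n : ℕ) (Ω : Set (Fin n → ℝ)) : Set (Fin n → ℂ) :=
  {z | (fun i => Real.pi * ‖z i‖ ^ 2) ∈ Ω}

theorem toricDomain_mono {n : ℕ} {Ω Ω' : Set (Fin n → ℝ)} (h : Ω ⊆ Ω') :
    toricDomain n Ω ⊆ toricDomain n Ω' :=
  fun _ hz => h hz

theorem toricDomain_simplex_eq_ellipsoid {n : ℕ} {L : ℝ} (hL : 0 < L) (v : Fin n → ℝ) :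
    toricDomain n {x | (∀ i, 0 ≤ x i) ∧ ∑ i, v i * x i ≤ L} =
      ellipsoid n (fun i => L / v i) := by
  have hsum : ∀ z : Fin n → ℂ, ∑ i, Real.pi * ‖z i‖ ^ 2 / (L / v i) =
      (∑ i, v i * (Real.pi * ‖z i‖ ^ 2)) / L := by
    intro z
    rw [sum_div]
    exact sum_congr rfl fun i _ => by rw [div_div_eq_mul_div]; ring
  ext z
  simp only [toricDomain, ellipsoid, Set.mem_ofPred_eq, hsum z, div_le_one hL]
  exact ⟨And.right, fun h => ⟨fun i => by positivity, h⟩⟩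

theorem Mcap_div_natCast {n : ℕ} (hn : 0 < n) {L : ℝ} (hL : 0 < L) {v : Fin n → ℕ}
    (hv : ∀ i, 0 < v i) :
    Mcap n (fun i => L / (v i : ℝ)) (∑ i, v i) = L := by
  have hdiv : ∀ (t : ℝ) i, t / (L / (v i : ℝ)) = t / L * v i := fun t i => by
    rw [div_div_eq_mul_div, mul_div_right_comm]
  refine IsLeast.csInf_eq ⟨⟨hL, ?_⟩, ?_⟩
  · simp [hdiv, hL.ne']
  · rintro t ⟨-, ht⟩
    by_contra! htL
    -- below `L` every `⌊t v_i / L⌋` falls short of `v_i`, so the sum falls short of `∑ v_i`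
    have hlt : ∀ i ∈ univ, ⌊t / (L / (v i : ℝ))⌋ < (v i : ℤ) := fun i _ => by
      rw [Int.floor_lt, hdiv]
      push_cast
      have hvi : (0 : ℝ) < v i := by exact_mod_cast hv i
      exact mul_lt_of_lt_one_left hvi ((div_lt_one hL).mpr htL)
    have : Nonempty (Fin n) := Fin.pos_iff_nonempty.mp hn
    have hsum_lt := sum_lt_sum_of_nonempty univ_nonempty hlt
    push_cast at ht
    omega

theorem stmt9_general (n : ℕ) (hn : 0 < n)
    (c : ℕ → Set (Fin n → ℂ) → ℝ)
    (hmono : ∀ (k : ℕ) (X X' : Set (Fin n → ℂ)), X ⊆ X' → c k X ≤ c k X')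
    (hell : ∀ (k : ℕ) (a : Fin n → ℝ), (∀ i, 0 < a i) →
        c k (ellipsoid n a) = Mcap n a k)
    (Ω : Set (Fin n → ℝ))
    (hΩpos : ∀ w ∈ Ω, ∀ i, 0 ≤ w i)
    (k : ℕ)
    (v : Fin n → ℕ) (hv : ∀ i, 0 < v i) (hsum : ∑ i, v i = k)
    (L : ℝ) (hLpos : 0 < L)
    (hL : IsGreatest {t : ℝ | ∃ w ∈ Ω, t = ∑ i, (v i : ℝ) * w i} L) :
    Ω ⊆ {x | (∀ i, 0 ≤ x i) ∧ ∑ i, (v i : ℝ) * x i ≤ L} ∧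
    toricDomain n {x | (∀ i, 0 ≤ x i) ∧ ∑ i, (v i : ℝ) * x i ≤ L} =
      ellipsoid n (fun i => L / (v i : ℝ)) ∧
    c k (ellipsoid n (fun i => L / (v i : ℝ))) = L ∧
    c k (toricDomain n Ω) ≤ L := by
  have hsub : Ω ⊆ {x | (∀ i, 0 ≤ x i) ∧ ∑ i, (v i : ℝ) * x i ≤ L} :=
    fun w hw => ⟨hΩpos w hw, hL.2 ⟨w, hw, rfl⟩⟩
  have hE := toricDomain_simplex_eq_ellipsoid hLpos fun i => (v i : ℝ)
  have hc : c k (ellipsoid n (fun i => L / (v i : ℝ))) = L := by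
    rw [hell k _ fun i => div_pos hLpos (by exact_mod_cast hv i), ← hsum,
      Mcap_div_natCast hn hLpos hv]
  refine ⟨hsub, hE, hc, ?_⟩
  calc c k (toricDomain n Ω)
      ≤ c k (toricDomain n {x | (∀ i, 0 ≤ x i) ∧ ∑ i, (v i : ℝ) * x i ≤ L}) :=
        hmono k _ _ (toricDomain_mono hsub)
    _ = L := by rw [hE, hc]

/-- if the `c_k` are monotone under inclusion and equal `M_k` on
ellipsoids, and `Ω` is a compact convex moment image with `v ∈ ℤ_{>0}^n`,
`∑ v_i = k` and `L = ‖v‖*_Ω`, then `Ω ⊆ Ω' = {x ≥ 0 : ⟨v,x⟩ ≤ L}`, the toric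
domain `X_{Ω'}` is the ellipsoid `E(L/v_1,…,L/v_n)`, `c_k` of that ellipsoid is
`L`, and hence `c_k(X_Ω) ≤ ‖v‖*_Ω`. -/
theorem stmt9 (n : ℕ) (hn : 0 < n)
    (c : ℕ → Set (Fin n → ℂ) → ℝ)
    (hmono : ∀ (k : ℕ) (X X' : Set (Fin n → ℂ)), X ⊆ X' → c k X ≤ c k X')
    (hell : ∀ (k : ℕ) (a : Fin n → ℝ), (∀ i, 0 < a i) →
        c k (ellipsoid n a) = Mcap n a k)
    (Ω : Set (Fin n → ℝ)) (hΩne : Ω.Nonempty) (hΩc : IsCompact Ω)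
    (hΩconv : Convex ℝ Ω) (hΩpos : ∀ w ∈ Ω, ∀ i, 0 ≤ w i)
    (k : ℕ) (hk : 0 < k)
    (v : Fin n → ℕ) (hv : ∀ i, 0 < v i) (hsum : ∑ i, v i = k)
    (L : ℝ) (hLpos : 0 < L)
    (hL : IsGreatest {t : ℝ | ∃ w ∈ Ω, t = ∑ i, (v i : ℝ) * w i} L) :
    Ω ⊆ {x | (∀ i, 0 ≤ x i) ∧ ∑ i, (v i : ℝ) * x i ≤ L} ∧
    toricDomain n {x | (∀ i, 0 ≤ x i) ∧ ∑ i, (v i : ℝ) * x i ≤ L} =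
      ellipsoid n (fun i => L / (v i : ℝ)) ∧
    c k (ellipsoid n (fun i => L / (v i : ℝ))) = L ∧
    c k (toricDomain n Ω) ≤ L :=
  stmt9_general n hn c hmono hell Ω hΩpos k v hv hsum L hLpos hL
end

section
/- Let $\Omega \subset \mathbb{R}^n_{\ge 0}$ be such that $\widehat{\Omega} = \{x \in \mathbb{R}^n : (|x_1|,\ldots,|x_n|) \in \Omega\}$ is compact and convex (a convex toric moment image), and suppose $(\delta,\ldots,\delta) \in \Omega$ with $\delta$ maximal. Then $\{x \in \mathbb{R}^n_{\ge 0} : x_i \le \delta \ \forall i\} \subset \Omega \subset \{x \in \mathbb{R}^n_{\ge 0} : \min_i x_i \le \delta\}$. -/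
/-!
A convex set `Ω̂ ⊆ ℝⁿ` whose membership depends only on the absolute values of the coordinates is
solid: shrinking one coordinate in absolute value stays on the segment between `z` and its
reflection in that coordinate, and the coordinates can be shrunk one at a time. Hence `Ω` is
downward closed in `ℝⁿ_{≥0}`, which gives the cube `[0, δ]ⁿ ⊆ Ω`; and a point of `Ω` with all
coordinates above `δ` would dominate the diagonal point `(m, …, m)`, `m` its least coordinate,
contradicting the maximality of `δ`.
-/

open Function

variable {ι : Type*}

def absPreimage (Ω : Set (ι → ℝ)) : Set (ι → ℝ) := {x | (fun i => |x i|) ∈ Ω}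

section Solid

variable [DecidableEq ι] {Ω : Set (ι → ℝ)}

lemma update_mem_absPreimage_of_abs_le (hconv : Convex ℝ (absPreimage Ω)) {z : ι → ℝ}
    (hz : z ∈ absPreimage Ω) (i : ι) {c : ℝ} (hc : |c| ≤ |z i|) :
    update z i c ∈ absPreimage Ω := by
  have hend : ∀ a, |a| = |z i| → update z i a ∈ absPreimage Ω := fun a ha => by
    have : (fun j => |update z i a j|) = fun j => |z j| := by
      funext j
      rcases eq_or_ne j i with rfl | hj
      · simpa using ha
      · simp [hj]
    simpa [absPreimage, this] using hz
  have hseg : c ∈ segment ℝ (-|z i|) |z i| := by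
    rw [segment_eq_Icc (neg_le_self (abs_nonneg _))]
    exact abs_le.mp hc
  refine hconv.segment_subset (hend _ (by rw [abs_neg, abs_abs])) (hend _ (abs_abs _)) ?_
  rw [← Pi.image_update_segment]
  exact ⟨c, hseg, rfl⟩

lemma mem_absPreimage_of_abs_le [Fintype ι] (hconv : Convex ℝ (absPreimage Ω)) {y z : ι → ℝ}
    (hz : z ∈ absPreimage Ω) (hyz : ∀ i, |y i| ≤ |z i|) : y ∈ absPreimage Ω := by
  suffices ∀ s : Finset ι, s.piecewise y z ∈ absPreimage Ω by
    simpa using this Finset.univ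
  intro s
  induction s using Finset.induction_on with
  | empty => simpa using hz
  | insert i s hi ih =>
    rw [Finset.piecewise_insert]
    exact update_mem_absPreimage_of_abs_le hconv ih i
      (by rw [Finset.piecewise_eq_of_notMem _ _ _ hi]; exact hyz i)

lemma mem_of_nonneg_of_le [Fintype ι] (hΩ : Ω ⊆ {x | ∀ i, 0 ≤ x i})
    (hconv : Convex ℝ (absPreimage Ω)) {y z : ι → ℝ} (hz : z ∈ Ω) (hy : 0 ≤ y) (hyz : y ≤ z) :
    y ∈ Ω := by
  have habs : ∀ x : ι → ℝ, 0 ≤ x → (fun i => |x i|) = x := fun x hx =>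
    funext fun i => abs_of_nonneg (hx i)
  have hz' : z ∈ absPreimage Ω := by
    simpa [absPreimage, habs z (hΩ hz)] using hz
  have := mem_absPreimage_of_abs_le hconv hz' fun i => by
    rw [abs_of_nonneg (hy i), abs_of_nonneg ((hy i).trans (hyz i))]
    exact hyz i
  simpa [absPreimage, habs y hy] using this

end Solid

theorem stmt16_general (n : ℕ) (hn : 0 < n) (Ω : Set (Fin n → ℝ))
    (hΩ : Ω ⊆ {x | ∀ i, 0 ≤ x i})
    (hconv : Convex ℝ {x : Fin n → ℝ | (fun i => |x i|) ∈ Ω})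
    (δ : ℝ) (hmem : (fun _ => δ) ∈ Ω)
    (hmax : ∀ δ' : ℝ, δ < δ' → (fun _ : Fin n => δ') ∉ Ω) :
    {x : Fin n → ℝ | ∀ i, 0 ≤ x i ∧ x i ≤ δ} ⊆ Ω ∧
    Ω ⊆ {x | ∃ i, x i ≤ δ} := by
  have hconv' : Convex ℝ (absPreimage Ω) := hconv
  refine ⟨fun x hx => mem_of_nonneg_of_le hΩ hconv' hmem (fun i => (hx i).1) (fun i => (hx i).2),
    fun x hx => ?_⟩
  have : Nonempty (Fin n) := ⟨⟨0, hn⟩⟩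
  obtain ⟨i₀, hi₀⟩ := Finite.exists_min x
  exact ⟨i₀, not_lt.mp fun hlt =>
    hmax (x i₀) hlt (mem_of_nonneg_of_le hΩ hconv' hx (fun _ => hΩ hx i₀) hi₀)⟩

/-- if `Ω ⊆ ℝ^n_{≥0}` is such that
`Ω̂ = {x ∈ ℝ^n : (|x_1|,…,|x_n|) ∈ Ω}` is compact and convex (a convex toric
moment image), and `(δ,…,δ) ∈ Ω` with `δ` maximal, then
`{x : 0 ≤ x_i ≤ δ} ⊆ Ω ⊆ {x ≥ 0 : min_i x_i ≤ δ}`. -/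
theorem stmt16 (n : ℕ) (hn : 0 < n) (Ω : Set (Fin n → ℝ))
    (hΩ : Ω ⊆ {x | ∀ i, 0 ≤ x i})
    (hc : IsCompact {x : Fin n → ℝ | (fun i => |x i|) ∈ Ω})
    (hconv : Convex ℝ {x : Fin n → ℝ | (fun i => |x i|) ∈ Ω})
    (δ : ℝ) (hδ : 0 < δ) (hmem : (fun _ => δ) ∈ Ω)
    (hmax : ∀ δ' : ℝ, δ < δ' → (fun _ : Fin n => δ') ∉ Ω) :
    {x : Fin n → ℝ | ∀ i, 0 ≤ x i ∧ x i ≤ δ} ⊆ Ω ∧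
    Ω ⊆ {x | ∃ i, x i ≤ δ} :=
  stmt16_general n hn Ω hΩ hconv δ hmem hmax
end
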